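/- Let d ≥ 2, on (ℂ^d)^{⊗3} let H = S_{12} + S_{13}, and let ψ ∈ ℂ^d be a unit vector that is not proportional to |0⟩. If t ∈ ℝ satisfies e^{3it} ≠ 1, then the reduced density matrix on the second tensor factor (observer A's memory) of the evolved state e^{−itH}(ψ⊗|0⟩⊗|0⟩) is not pure (it has rank at least 2); in particular, observer A's memory remains entangled with the rest of the system after the simultaneous swap measurement. -/

import Mathlib

open Matrix Kronecker
open scoped ComplexOrder

noncomputable section

abbrev Mat (n : ℕ) := Matrix (Fin n) (Fin n) ℂ

/-- A density matrix: positive semidefinite with trace 1. -/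
def IsDensity {n : Type*} [Fintype n] (ρ : Matrix n n ℂ) : Prop :=
  ρ.PosSemidef ∧ ρ.trace = 1

/-- The rank-one projector `|ψ⟩⟨ψ|`. -/
def proj {n : Type*} (ψ : n → ℂ) : Matrix n n ℂ :=
  Matrix.of fun i j => ψ i * star (ψ j)

/-- Partial trace over the first tensor factor. -/
def trFst {a b : Type*} [Fintype a] (X : Matrix (a × b) (a × b) ℂ) : Matrix b b ℂ :=
  Matrix.of fun j l => ∑ i : a, X (i, j) (i, l)

/-- Partial trace over the second tensor factor. -/
def trSnd {a b : Type*} [Fintype b] (X : Matrix (a × b) (a × b) ℂ) : Matrix a a ℂ :=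
  Matrix.of fun i k => ∑ j : b, X (i, j) (k, j)

/-- `id ⊗ Φ` acting on matrices over a product index type. -/
def idTensor {k d m : Type*} (Φ : Matrix d d ℂ → Matrix m m ℂ)
    (X : Matrix (k × d) (k × d) ℂ) : Matrix (k × m) (k × m) ℂ :=
  Matrix.of fun p q => Φ (Matrix.of fun j l => X (p.1, j) (q.1, l)) p.2 q.2

/-- Complete positivity. -/
def IsCP {d m : ℕ} (Φ : Mat d → Mat m) : Prop :=
  ∀ (k : ℕ) (X : Matrix (Fin k × Fin d) (Fin k × Fin d) ℂ),
    X.PosSemidef → (idTensor Φ X).PosSemidef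

/-- Trace preservation. -/
def IsTP {d m : ℕ} (Φ : Mat d → Mat m) : Prop :=
  ∀ X, (Φ X).trace = X.trace

/-- A quantum channel: linear, completely positive, trace preserving. -/
def IsChannel {d m : ℕ} (Φ : Mat d → Mat m) : Prop :=
  IsLinearMap ℂ Φ ∧ IsCP Φ ∧ IsTP Φ

/-- The maximally entangled unit vector `|Φ⁺⟩ = (1/√d) ∑ₖ |k⟩⊗|k⟩`. -/
def phiPlusVec (d : ℕ) : Fin d × Fin d → ℂ :=
  fun p => if p.1 = p.2 then ((Real.sqrt d : ℝ) : ℂ)⁻¹ else 0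

/-- The density matrix of the maximally entangled state. -/
def phiPlus (d : ℕ) : Matrix (Fin d × Fin d) (Fin d × Fin d) ℂ :=
  proj (phiPlusVec d)

/-- Von Neumann entropy `S(ρ) = -∑ λᵢ log λᵢ` over the eigenvalues of `ρ`. -/
def entropy {n : Type*} [Fintype n] [DecidableEq n] (ρ : Matrix n n ℂ) : ℝ :=
  if h : ρ.IsHermitian then -∑ i, h.eigenvalues i * Real.log (h.eigenvalues i) else 0

/-- Quantum mutual information of a bipartite state. -/
def mutualInfo {a b : Type*} [Fintype a] [Fintype b] [DecidableEq a] [DecidableEq b]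
    (τ : Matrix (a × b) (a × b) ℂ) : ℝ :=
  entropy (trSnd τ) + entropy (trFst τ) - entropy τ

/-- Elementary tensor of three vectors on `(ℂ^d)^{⊗3}`. -/
def tp3 {d : ℕ} (x y z : Fin d → ℂ) : Fin d × Fin d × Fin d → ℂ :=
  fun p => x p.1 * y p.2.1 * z p.2.2

/-- The basis vector `|0⟩` of `ℂ^d`. -/
def e0vec (d : ℕ) : Fin d → ℂ := fun i => if (i : ℕ) = 0 then 1 else 0

/-- The unitary swapping the first and second tensor factors. -/
def S12 (d : ℕ) : Matrix (Fin d × Fin d × Fin d) (Fin d × Fin d × Fin d) ℂ :=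
  Matrix.of fun p q => if p.1 = q.2.1 ∧ p.2.1 = q.1 ∧ p.2.2 = q.2.2 then 1 else 0

/-- The unitary swapping the first and third tensor factors. -/
def S13 (d : ℕ) : Matrix (Fin d × Fin d × Fin d) (Fin d × Fin d × Fin d) ℂ :=
  Matrix.of fun p q => if p.1 = q.2.2 ∧ p.2.1 = q.2.1 ∧ p.2.2 = q.1 then 1 else 0

/-- The reduced density matrix on the second factor of a tripartite vector state. -/
def redSecond {d : ℕ} (v : Fin d × Fin d × Fin d → ℂ) : Mat d :=
  Matrix.of fun j l => ∑ i : Fin d, ∑ k : Fin d, v (i, j, k) * star (v (i, l, k))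

/-!
The vectors `x⊗y⊗y + y⊗x⊗y + y⊗y⊗x` and `2 x⊗y⊗y - y⊗x⊗y - y⊗y⊗x` are eigenvectors of
`S₁₂ + S₁₃` with eigenvalues `2` and `-1`. Hence `e^{cH} (x⊗y⊗y) = A x⊗y⊗y + B (y⊗x⊗y + y⊗y⊗x)`
with `A = (e^{2c} + 2e^{-c})/3` and `B = (e^{2c} - e^{-c})/3 = e^{-c} (e^{3c} - 1)/3`, which is
nonzero when `e^{3c} ≠ 1`.

The reduced state on the second factor is `M Mᴴ`, where `M` is the unfolding of the global state
along that factor, so it has the rank of `M`. For `y = |0⟩` and `m ≠ 0` with `ψ m ≠ 0`, the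
columns of `M` at `(0, m)` and `(0, 0)` are `B ψₘ |0⟩` and `B ψ + (A + B) ψ₀ |0⟩`. They span
`|0⟩` and `ψ`, which are independent, so the rank is at least `2`, whereas a pure state has rank
`1`.
-/

theorem Matrix.exp_mulVec_of_mulVec_eq_smul {𝕂 n : Type*} [RCLike 𝕂] [Fintype n] [DecidableEq n]
    {M : Matrix n n 𝕂} {u : n → 𝕂} {μ : 𝕂} (h : M *ᵥ u = μ • u) :
    NormedSpace.exp M *ᵥ u = NormedSpace.exp μ • u := by
  let _ : NormedRing (Matrix n n 𝕂) := Matrix.linftyOpNormedRing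
  let _ : NormedAlgebra 𝕂 (Matrix n n 𝕂) := Matrix.linftyOpNormedAlgebra
  -- stated for the operator-norm uniformity, which is not syntactically the product one
  have : @CompleteSpace (Matrix n n 𝕂) PseudoMetricSpace.toUniformSpace :=
    FiniteDimensional.complete 𝕂 _
  let U : Matrix n n 𝕂 := .of fun i _ => u i
  have hU : SemiconjBy U (diagonal fun _ ↦ μ) M := by
    ext i j
    simpa [U, SemiconjBy, mul_comm, mulVec, dotProduct, mul_apply, diagonal_apply]
      using (congrFun h i).symm
  have hexp : SemiconjBy U (NormedSpace.exp (diagonal fun _ ↦ μ)) (NormedSpace.exp M) := by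
    simp only [NormedSpace.exp_eq_tsum 𝕂]
    exact SemiconjBy.tsum_right U (NormedSpace.expSeries_summable' _)
      (NormedSpace.expSeries_summable' _) fun k ↦ (hU.pow_right k).smul_right _
  rw [exp_diagonal] at hexp
  ext i
  simpa [U, SemiconjBy, mul_comm, mulVec, dotProduct, mul_apply, diagonal_apply]
    using (congrFun (congrFun hexp i) i).symm

theorem Matrix.two_le_rank_of_mem_span_cols {K m n : Type*} [Field K] [Fintype m] [Fintype n]
    (M : Matrix m n K) {x y : m → K} (hxy : LinearIndependent K ![x, y])
    (hx : x ∈ Submodule.span K (Set.range Mᵀ)) (hy : y ∈ Submodule.span K (Set.range Mᵀ)) :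
    2 ≤ M.rank := by
  have hle : Submodule.span K (Set.range ![x, y]) ≤ Submodule.span K (Set.range Mᵀ) := by
    rw [Submodule.span_le]
    rintro _ ⟨i, rfl⟩
    fin_cases i
    exacts [hx, hy]
  calc 2 = Module.finrank K (Submodule.span K (Set.range ![x, y])) := by
        rw [finrank_span_eq_card hxy, Fintype.card_fin]
    _ ≤ M.rank := M.rank_eq_finrank_span_cols ▸ Submodule.finrank_mono hle

theorem ne_proj_of_two_le_rank {n : Type*} [Fintype n] {ρ : Matrix n n ℂ} (h : 2 ≤ ρ.rank)
    (v : n → ℂ) : ρ ≠ proj v := by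
  rintro rfl
  have : (proj v).rank ≤ 1 := rank_vecMulVec_le v (star v)
  omega

theorem S12_mulVec {d : ℕ} (v : Fin d × Fin d × Fin d → ℂ) :
    S12 d *ᵥ v = fun p => v (p.2.1, p.1, p.2.2) := by
  ext ⟨a, b, c⟩
  simp [S12, mulVec, dotProduct, ite_and, Fintype.sum_prod_type, eq_comm]

theorem S13_mulVec {d : ℕ} (v : Fin d × Fin d × Fin d → ℂ) :
    S13 d *ᵥ v = fun p => v (p.2.2, p.2.1, p.1) := by
  ext ⟨a, b, c⟩
  simp [S13, mulVec, dotProduct, ite_and, Fintype.sum_prod_type, eq_comm]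

section Evolution

variable {d : ℕ} (x y : Fin d → ℂ)

theorem S12_add_S13_mulVec_symm :
    (S12 d + S13 d) *ᵥ (tp3 x y y + tp3 y x y + tp3 y y x)
      = (2 : ℂ) • (tp3 x y y + tp3 y x y + tp3 y y x) := by
  rw [add_mulVec, S12_mulVec, S13_mulVec]
  ext p
  simp only [tp3, Pi.add_apply, Pi.smul_apply, smul_eq_mul]
  ring

theorem S12_add_S13_mulVec_antisymm :
    (S12 d + S13 d) *ᵥ ((2 : ℂ) • tp3 x y y - tp3 y x y - tp3 y y x)
      = (-1 : ℂ) • ((2 : ℂ) • tp3 x y y - tp3 y x y - tp3 y y x) := by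
  rw [add_mulVec, S12_mulVec, S13_mulVec]
  ext p
  simp only [tp3, Pi.add_apply, Pi.sub_apply, Pi.smul_apply, smul_eq_mul]
  ring

theorem exp_smul_S12_add_S13_mulVec_tp3 (c : ℂ) :
    NormedSpace.exp (c • (S12 d + S13 d)) *ᵥ tp3 x y y
      = ((Complex.exp (2 * c) + 2 * Complex.exp (-c)) / 3) • tp3 x y y
        + ((Complex.exp (2 * c) - Complex.exp (-c)) / 3) • (tp3 y x y + tp3 y y x) := by
  have hsymm : (c • (S12 d + S13 d)) *ᵥ (tp3 x y y + tp3 y x y + tp3 y y x)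
      = (2 * c) • (tp3 x y y + tp3 y x y + tp3 y y x) := by
    rw [smul_mulVec, S12_add_S13_mulVec_symm, smul_smul, mul_comm]
  have hanti : (c • (S12 d + S13 d)) *ᵥ ((2 : ℂ) • tp3 x y y - tp3 y x y - tp3 y y x)
      = (-c) • ((2 : ℂ) • tp3 x y y - tp3 y x y - tp3 y y x) := by
    rw [smul_mulVec, S12_add_S13_mulVec_antisymm, smul_smul, mul_neg_one]
  have hdecomp : tp3 x y y = (3 : ℂ)⁻¹ • (tp3 x y y + tp3 y x y + tp3 y y x)
      + (3 : ℂ)⁻¹ • ((2 : ℂ) • tp3 x y y - tp3 y x y - tp3 y y x) := by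
    ext p
    simp only [Pi.add_apply, Pi.sub_apply, Pi.smul_apply, smul_eq_mul]
    ring
  rw [hdecomp, mulVec_add, mulVec_smul, mulVec_smul, exp_mulVec_of_mulVec_eq_smul hsymm,
    exp_mulVec_of_mulVec_eq_smul hanti, ← Complex.exp_eq_exp_ℂ]
  ext p
  simp only [Pi.add_apply, Pi.sub_apply, Pi.smul_apply, smul_eq_mul]
  ring

end Evolution

theorem exp_two_mul_sub_exp_neg_ne_zero {c : ℂ} (h : Complex.exp (3 * c) ≠ 1) :
    Complex.exp (2 * c) - Complex.exp (-c) ≠ 0 := by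
  have hfactor : Complex.exp (2 * c) - Complex.exp (-c)
      = Complex.exp (-c) * (Complex.exp (3 * c) - 1) := by
    rw [mul_sub, ← Complex.exp_add, mul_one]
    ring_nf
  rw [hfactor]
  exact mul_ne_zero (Complex.exp_ne_zero _) (sub_ne_zero.mpr h)

def unfoldSecond {d : ℕ} (v : Fin d × Fin d × Fin d → ℂ) : Matrix (Fin d) (Fin d × Fin d) ℂ :=
  .of fun j p => v (p.1, j, p.2)

theorem redSecond_eq_mul_conjTranspose {d : ℕ} (v : Fin d × Fin d × Fin d → ℂ) :
    redSecond v = unfoldSecond v * (unfoldSecond v)ᴴ := by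
  ext j l
  simp [redSecond, unfoldSecond, mul_apply, Fintype.sum_prod_type]

theorem rank_redSecond {d : ℕ} (v : Fin d × Fin d × Fin d → ℂ) :
    (redSecond v).rank = (unfoldSecond v).rank := by
  rw [redSecond_eq_mul_conjTranspose, rank_self_mul_conjTranspose]

theorem exists_ne_zero_of_ne_smul_e0vec {d : ℕ} {x : Fin d → ℂ} (hx : ¬∃ c : ℂ, x = c • e0vec d) :
    ∃ m : Fin d, (m : ℕ) ≠ 0 ∧ x m ≠ 0 := by
  by_contra! h
  cases d with
  | zero => exact hx ⟨0, Subsingleton.elim _ _⟩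
  | succ n =>
    refine hx ⟨x 0, funext fun i => ?_⟩
    by_cases hi : (i : ℕ) = 0
    · simp [e0vec, show i = 0 from Fin.ext hi]
    · simp [e0vec, hi, h i hi]

theorem two_le_rank_unfoldSecond {d : ℕ} {x : Fin d → ℂ} (hx : ¬∃ c : ℂ, x = c • e0vec d)
    (A : ℂ) {B : ℂ} (hB : B ≠ 0) :
    2 ≤ (unfoldSecond (A • tp3 x (e0vec d) (e0vec d)
      + B • (tp3 (e0vec d) x (e0vec d) + tp3 (e0vec d) (e0vec d) x))).rank := by
  obtain ⟨m, hm, hxm⟩ := exists_ne_zero_of_ne_smul_e0vec hx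
  have : NeZero d := NeZero.of_pos m.pos
  set M := unfoldSecond (A • tp3 x (e0vec d) (e0vec d)
      + B • (tp3 (e0vec d) x (e0vec d) + tp3 (e0vec d) (e0vec d) x))
  have hcol0m : Mᵀ (0, m) = (B * x m) • e0vec d := by
    ext j
    simp [M, unfoldSecond, tp3, e0vec, (Fin.val_ne_zero_iff).1 hm]
  have hcol00 : Mᵀ (0, 0) = ((A + B) * x 0) • e0vec d + B • x := by
    ext j
    by_cases hj : j = 0
    · simp [M, unfoldSecond, tp3, e0vec, hj]
      ring
    · simp [M, unfoldSecond, tp3, e0vec, hj]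
  have hcol : ∀ p, Mᵀ p ∈ Submodule.span ℂ (Set.range Mᵀ) :=
    fun p => Submodule.subset_span (Set.mem_range_self p)
  have he : e0vec d ∈ Submodule.span ℂ (Set.range Mᵀ) := by
    have := Submodule.smul_mem _ (B * x m)⁻¹ (hcol0m ▸ hcol (0, m))
    rwa [inv_smul_smul₀ (mul_ne_zero hB hxm)] at this
  have hx' : x ∈ Submodule.span ℂ (Set.range Mᵀ) := by
    have := Submodule.smul_mem _ B⁻¹ (Submodule.sub_mem _
      (hcol00 ▸ hcol (0, 0)) (Submodule.smul_mem _ ((A + B) * x 0) he))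
    rwa [add_sub_cancel_left, inv_smul_smul₀ hB] at this
  have hind : LinearIndependent ℂ ![e0vec d, x] :=
    (LinearIndependent.pair_iff' fun h => by simpa [e0vec] using congrFun h 0).2
      fun a h => hx ⟨a, h.symm⟩
  exact M.two_le_rank_of_mem_span_cols hind he hx'

theorem stmt_19_general (d : ℕ) (ψ : Fin d → ℂ)
    (hnp : ¬ ∃ c : ℂ, ψ = c • e0vec d) (t : ℝ)
    (ht : Complex.exp (3 * Complex.I * (t : ℂ)) ≠ 1) :
    (¬ ∃ v : Fin d → ℂ, star v ⬝ᵥ v = 1 ∧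
        redSecond (NormedSpace.exp ((-(Complex.I * (t : ℂ))) • (S12 d + S13 d)) *ᵥ
          tp3 ψ (e0vec d) (e0vec d)) = proj v) ∧
    2 ≤ (redSecond (NormedSpace.exp ((-(Complex.I * (t : ℂ))) • (S12 d + S13 d)) *ᵥ
          tp3 ψ (e0vec d) (e0vec d))).rank := by
  set ρ := redSecond (NormedSpace.exp ((-(Complex.I * (t : ℂ))) • (S12 d + S13 d)) *ᵥ
    tp3 ψ (e0vec d) (e0vec d)) with hρ
  have hrank : 2 ≤ ρ.rank := by
    rw [hρ, rank_redSecond, exp_smul_S12_add_S13_mulVec_tp3]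
    refine two_le_rank_unfoldSecond hnp _ (div_ne_zero (exp_two_mul_sub_exp_neg_ne_zero ?_)
      three_ne_zero)
    rwa [show 3 * -(Complex.I * t) = -(3 * Complex.I * t) by ring, Complex.exp_neg, inv_ne_one]
  exact ⟨fun ⟨v, _, hv⟩ => ne_proj_of_two_le_rank hrank v hv, hrank⟩

/-- After a simultaneous swap measurement at a time with `e^{3it} ≠ 1` on a system state not
proportional to `|0⟩`, observer A's memory is not pure (it has rank at least 2), i.e. it
remains entangled with the rest of the system. -/
theorem stmt_19 (d : ℕ) (hd : 2 ≤ d) (ψ : Fin d → ℂ) (hψ : star ψ ⬝ᵥ ψ = 1)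
    (hnp : ¬ ∃ c : ℂ, ψ = c • e0vec d) (t : ℝ)
    (ht : Complex.exp (3 * Complex.I * (t : ℂ)) ≠ 1) :
    (¬ ∃ v : Fin d → ℂ, star v ⬝ᵥ v = 1 ∧
        redSecond (NormedSpace.exp ((-(Complex.I * (t : ℂ))) • (S12 d + S13 d)) *ᵥ
          tp3 ψ (e0vec d) (e0vec d)) = proj v) ∧
    2 ≤ (redSecond (NormedSpace.exp ((-(Complex.I * (t : ℂ))) • (S12 d + S13 d)) *ᵥ
          tp3 ψ (e0vec d) (e0vec d))).rank :=
  stmt_19_general d ψ hnp t ht
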